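/- Let U ⊆ ℝ^(n+2) be open, (ξ, N) a null frame on U, and Z : U → ℝ^(n+2) a differentiable closed conformal field with factor φ : U → ℝ such that its screen part vanishes identically, Z*(p) = P_p(Z p) = 0 for all p ∈ U, and η(Z p, ξ p) ≠ 0 for all p ∈ U. Then for every p ∈ U and every screen vector v at p: A_N(p)(v) = -(η(Z p, N p)/η(Z p, ξ p)) • A*_ξ(p)(v) - (φ(p)/η(Z p, ξ p)) • v. (Flat-Minkowski-ambient form of the paper's proposition that a closed conformal field orthogonal to the screen distribution makes the null hypersurface screen quasi-conformal.) -/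

import Mathlib

open scoped BigOperators

noncomputable section

/-- Euclidean space `ℝ^m`. -/
abbrev E (m : ℕ) : Type := EuclideanSpace ℝ (Fin m)

/-- The Minkowski bilinear form `η(x,y) = -(x 0)(y 0) + ∑_{i≥1} (x i)(y i)` on `ℝ^(n+2)`. -/
def eta {n : ℕ} (x y : E (n + 2)) : ℝ :=
  (∑ i, x i * y i) - 2 * (x 0 * y 0)

/-- Screen projection `P_p(w) = w - η(w,N)ξ - η(w,ξ)N` determined by the null frame at a point. -/
def sproj {n : ℕ} (xi N w : E (n + 2)) : E (n + 2) :=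
  w - eta w N • xi - eta w xi • N

/-- Screen shape operator `A*_ξ(p)(v) = -P_p(D_v ξ (p))`. -/
def Astar {n : ℕ} (xi N : E (n + 2) → E (n + 2)) (p v : E (n + 2)) : E (n + 2) :=
  -sproj (xi p) (N p) (fderiv ℝ xi p v)

/-- Shape operator `A_N(p)(v) = -P_p(D_v N (p))`. -/
def AN {n : ℕ} (xi N : E (n + 2) → E (n + 2)) (p v : E (n + 2)) : E (n + 2) :=
  -sproj (xi p) (N p) (fderiv ℝ N p v)

/-- Transversal one-form `τ_p(v) = η(D_v N(p), ξ p)`. -/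
def tau {n : ℕ} (xi N : E (n + 2) → E (n + 2)) (p v : E (n + 2)) : ℝ :=
  eta (fderiv ℝ N p v) (xi p)

/-- Screen part `Z*(p) = P_p(Z p)` of a vector field. -/
def Zstar {n : ℕ} (xi N Z : E (n + 2) → E (n + 2)) (p : E (n + 2)) : E (n + 2) :=
  sproj (xi p) (N p) (Z p)

/-- `A_{Z⊥}(p)(v) = η(Z p, N p) • A*_ξ(p)(v) + η(Z p, ξ p) • A_N(p)(v)`. -/
def AZperp {n : ℕ} (xi N Z : E (n + 2) → E (n + 2)) (p v : E (n + 2)) : E (n + 2) :=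
  eta (Z p) (N p) • Astar xi N p v + eta (Z p) (xi p) • AN xi N p v

/-! Since `Z` has no screen part, `Z = η(Z, N) ξ + η(Z, ξ) N` near `p`. Differentiate along a
screen vector `v` and apply the screen projection: it kills `ξ` and `N`, turns `D_v ξ`, `D_v N`
into `-A*_ξ v`, `-A_N v`, and fixes `D_v Z = φ v`. This gives
`φ v = -(η(Z, N) A*_ξ v + η(Z, ξ) A_N v)`, which is solved for `A_N v`. -/

open Filter Topology

section Minkowski

variable {n : ℕ}

lemma eta_comm (x y : E (n + 2)) : eta x y = eta y x := by
  simp only [eta, mul_comm]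

lemma eta_add_left (x y z : E (n + 2)) : eta (x + y) z = eta x z + eta y z := by
  simp only [eta, PiLp.add_apply, add_mul, Finset.sum_add_distrib]
  ring

lemma eta_smul_left (c : ℝ) (x z : E (n + 2)) : eta (c • x) z = c * eta x z := by
  simp only [eta, PiLp.smul_apply, smul_eq_mul, mul_sub, Finset.mul_sum, mul_assoc]
  ring

lemma DifferentiableAt.eta {F G : E (n + 2) → E (n + 2)} {p : E (n + 2)}
    (hF : DifferentiableAt ℝ F p) (hG : DifferentiableAt ℝ G p) :
    DifferentiableAt ℝ (fun q => _root_.eta (F q) (G q)) p := by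
  unfold _root_.eta
  fun_prop

end Minkowski

section ScreenProjection

variable {n : ℕ} {xi N : E (n + 2)}

lemma sproj_add (w w' : E (n + 2)) : sproj xi N (w + w') = sproj xi N w + sproj xi N w' := by
  simp only [sproj, eta_add_left, add_smul]
  abel

lemma sproj_smul (c : ℝ) (w : E (n + 2)) : sproj xi N (c • w) = c • sproj xi N w := by
  simp only [sproj, eta_smul_left, smul_sub, smul_smul]

lemma sproj_smul_add_smul (hξξ : eta xi xi = 0) (hNN : eta N N = 0) (hξN : eta xi N = 1)
    (a b : ℝ) : sproj xi N (a • xi + b • N) = 0 := by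
  simp only [sproj, eta_add_left, eta_smul_left, hξξ, hNN, hξN, eta_comm N xi]
  module

lemma sproj_of_screen {v : E (n + 2)} (hvξ : eta v xi = 0) (hvN : eta v N = 0) :
    sproj xi N v = v := by
  simp [sproj, hvξ, hvN]

lemma eq_smul_add_smul_of_sproj_eq_zero {w : E (n + 2)} (hw : sproj xi N w = 0) :
    w = eta w N • xi + eta w xi • N := by
  rw [sproj, sub_sub, sub_eq_zero] at hw
  exact hw

end ScreenProjection

section ShapeOperators

variable {n : ℕ} {ξ N Z : E (n + 2) → E (n + 2)} {p : E (n + 2)}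

lemma sproj_fderiv_eq_neg_AZperp (hξd : DifferentiableAt ℝ ξ p)
    (hNd : DifferentiableAt ℝ N p) (hZd : DifferentiableAt ℝ Z p)
    (hξξ : eta (ξ p) (ξ p) = 0) (hNN : eta (N p) (N p) = 0) (hξN : eta (ξ p) (N p) = 1)
    (hZs : ∀ᶠ q in 𝓝 p, Zstar ξ N Z q = 0) (v : E (n + 2)) :
    sproj (ξ p) (N p) (fderiv ℝ Z p v) = -AZperp ξ N Z p v := by
  set f : E (n + 2) → ℝ := fun q => eta (Z q) (N q)
  set g : E (n + 2) → ℝ := fun q => eta (Z q) (ξ q)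
  have hZ : Z =ᶠ[𝓝 p] fun q => f q • ξ q + g q • N q :=
    hZs.mono fun q hq => eq_smul_add_smul_of_sproj_eq_zero hq
  have hD : HasFDerivAt (fun q => f q • ξ q + g q • N q)
      ((f p • fderiv ℝ ξ p + (fderiv ℝ f p).smulRight (ξ p)) +
        (g p • fderiv ℝ N p + (fderiv ℝ g p).smulRight (N p))) p :=
    ((hZd.eta hNd).hasFDerivAt.smul hξd.hasFDerivAt).add
      ((hZd.eta hξd).hasFDerivAt.smul hNd.hasFDerivAt)
  have hDv : fderiv ℝ Z p v = (f p • fderiv ℝ ξ p v + g p • fderiv ℝ N p v) +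
      (fderiv ℝ f p v • ξ p + fderiv ℝ g p v • N p) := by
    rw [hZ.fderiv_eq, hD.fderiv]
    simp only [add_apply, smul_apply, ContinuousLinearMap.smulRight_apply]
    abel
  rw [hDv, sproj_add, sproj_smul_add_smul hξξ hNN hξN, add_zero, sproj_add, sproj_smul,
    sproj_smul, AZperp, Astar, AN]
  module

lemma AZperp_eq_neg_smul_of_fderiv_eq_smul_id {c : ℝ} (hξd : DifferentiableAt ℝ ξ p)
    (hNd : DifferentiableAt ℝ N p) (hZd : DifferentiableAt ℝ Z p)
    (hξξ : eta (ξ p) (ξ p) = 0) (hNN : eta (N p) (N p) = 0) (hξN : eta (ξ p) (N p) = 1)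
    (hCC : fderiv ℝ Z p = c • ContinuousLinearMap.id ℝ (E (n + 2)))
    (hZs : ∀ᶠ q in 𝓝 p, Zstar ξ N Z q = 0) {v : E (n + 2)}
    (hvξ : eta v (ξ p) = 0) (hvN : eta v (N p) = 0) :
    AZperp ξ N Z p v = -(c • v) := by
  rw [← neg_neg (AZperp ξ N Z p v),
    ← sproj_fderiv_eq_neg_AZperp hξd hNd hZd hξξ hNN hξN hZs,
    hCC, smul_apply, ContinuousLinearMap.id_apply, sproj_smul, sproj_of_screen hvξ hvN]

lemma AN_eq_of_AZperp_eq_neg_smul {c : ℝ} {v : E (n + 2)} (hZξ : eta (Z p) (ξ p) ≠ 0)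
    (h : AZperp ξ N Z p v = -(c • v)) :
    AN ξ N p v = (-(eta (Z p) (N p) / eta (Z p) (ξ p))) • Astar ξ N p v
      - (c / eta (Z p) (ξ p)) • v := by
  have hAN : AN ξ N p v =
      (eta (Z p) (ξ p))⁻¹ • (-(c • v) - eta (Z p) (N p) • Astar ξ N p v) := by
    rw [← h, AZperp, add_sub_cancel_left, inv_smul_smul₀ hZξ]
  rw [hAN]
  module

end ShapeOperators

/-- A closed conformal field orthogonal to the screen distribution makes the
null hypersurface screen quasi-conformal (flat Minkowski ambient form). -/
theorem cc_field_orthogonal_screen_quasi_conformal {n : ℕ}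
    (U : Set (E (n + 2))) (hU : IsOpen U)
    (ξ N Z : E (n + 2) → E (n + 2)) (φ : E (n + 2) → ℝ)
    (hξd : ∀ p ∈ U, DifferentiableAt ℝ ξ p)
    (hNd : ∀ p ∈ U, DifferentiableAt ℝ N p)
    (hZd : ∀ p ∈ U, DifferentiableAt ℝ Z p)
    (hξξ : ∀ p ∈ U, eta (ξ p) (ξ p) = 0)
    (hNN : ∀ p ∈ U, eta (N p) (N p) = 0)
    (hξN : ∀ p ∈ U, eta (ξ p) (N p) = 1)
    (hCC : ∀ p ∈ U, fderiv ℝ Z p = φ p • ContinuousLinearMap.id ℝ (E (n + 2)))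
    (hZs : ∀ p ∈ U, Zstar ξ N Z p = 0)
    (hZξ : ∀ p ∈ U, eta (Z p) (ξ p) ≠ 0) :
    ∀ p ∈ U, ∀ v : E (n + 2), eta v (ξ p) = 0 → eta v (N p) = 0 →
      AN ξ N p v = (-(eta (Z p) (N p) / eta (Z p) (ξ p))) • Astar ξ N p v
        - (φ p / eta (Z p) (ξ p)) • v := by
  intro p hp v hvξ hvN
  have hZs_nhds : ∀ᶠ q in 𝓝 p, Zstar ξ N Z q = 0 := eventually_of_mem (hU.mem_nhds hp) hZs
  exact AN_eq_of_AZperp_eq_neg_smul (hZξ p hp) <|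
    AZperp_eq_neg_smul_of_fderiv_eq_smul_id (hξd p hp) (hNd p hp) (hZd p hp) (hξξ p hp)
      (hNN p hp) (hξN p hp) (hCC p hp) hZs_nhds hvξ hvN
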